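/- arXiv:1211.1528 — 2 statements merged into one kernel-verified Lean document; each statement's English description precedes it below -/
import Mathlib

section
/- For every unitary (n+1)×(n+1) complex matrix U and all homogeneous polynomials h, g of degree s in the variables x_0,…,x_n with complex coefficients, one has ⟨h∘U, g∘U⟩ = ⟨h, g⟩, where h∘U denotes the polynomial obtained by the linear change of variables x ↦ Ux and ⟨·,·⟩ is the Bombieri–Weyl inner product. That is, the Bombieri–Weyl Hermitian product is unitarily invariant. -/
noncomputable section

open MvPolynomial Finset

/-- The Bombieri–Weyl inner product of two degree-`s` forms in the variables `x_0, …, x_n`: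
`⟨∑ a_α x^α, ∑ b_α x^α⟩ = ∑ (α_0!⋯α_n!/s!)·a_α·conj(b_α)`. -/
def BWinner {n : ℕ} (s : ℕ) (p q : MvPolynomial (Fin (n + 1)) ℂ) : ℂ :=
  ∑ α ∈ p.support ∪ q.support,
    ((∏ j, ((α j).factorial : ℂ)) / (s.factorial : ℂ)) * p.coeff α * (starRingEnd ℂ) (q.coeff α)

/-- Composition of a polynomial with the linear change of variables `x ↦ U x`. -/
def compVars {n : ℕ} (U : Matrix (Fin (n + 1)) (Fin (n + 1)) ℂ)
    (p : MvPolynomial (Fin (n + 1)) ℂ) : MvPolynomial (Fin (n + 1)) ℂ :=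
  MvPolynomial.aeval (fun j => ∑ k, MvPolynomial.C (U j k) * MvPolynomial.X k) p

namespace BWaux

variable {m s : ℕ}

/-- The exponent multi-index associated to a word `w : Fin s → Fin m`. -/
def nu (w : Fin s → Fin m) : Fin m →₀ ℕ := ∑ i, Finsupp.single (w i) 1

lemma nu_apply (w : Fin s → Fin m) (j : Fin m) :
    nu w j = #(univ.filter fun i => w i = j) := by
  classical
  rw [nu, Finset.card_filter, Finsupp.finset_sum_apply]
  refine Finset.sum_congr rfl fun i _ => ?_
  simp [Finsupp.single_apply]

lemma sum_nu (w : Fin s → Fin m) : ∑ j, nu w j = s := by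
  classical
  simp only [nu, Finsupp.finset_sum_apply]
  rw [Finset.sum_comm]
  have h1 : ∀ i : Fin s, ∑ j : Fin m, (Finsupp.single (w i) 1 : Fin m →₀ ℕ) j = 1 := by
    intro i
    simp [Finsupp.single_apply, Finset.sum_ite_eq]
  simp [h1]

lemma degree_eq_sum (α : Fin m →₀ ℕ) : α.degree = ∑ j, α j := by
  classical
  refine Finset.sum_subset (Finset.subset_univ _) fun j _ hj => ?_
  exact Finsupp.notMem_support_iff.mp hj

lemma nu_degree (w : Fin s → Fin m) : (nu w).degree = s := by
  rw [degree_eq_sum, sum_nu]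

lemma nu_comp_perm (w : Fin s → Fin m) (σ : Equiv.Perm (Fin s)) :
    nu (fun i => w (σ i)) = nu w := by
  classical
  simpa [nu] using Equiv.sum_comp σ (fun i => (Finsupp.single (w i) 1 : Fin m →₀ ℕ))

lemma exists_perm_of_nu_eq {v w : Fin s → Fin m} (hvw : nu v = nu w) :
    ∃ σ : Equiv.Perm (Fin s), ∀ i, v i = w (σ i) := by
  classical
  have hcard : ∀ j : Fin m, Fintype.card {i // v i = j} = Fintype.card {i // w i = j} := by
    intro j
    rw [Fintype.card_subtype, Fintype.card_subtype, ← nu_apply, ← nu_apply, hvw]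
  let e : ∀ j : Fin m, {i // v i = j} ≃ {i // w i = j} :=
    fun j => Fintype.equivOfCardEq (hcard j)
  exact ⟨Equiv.ofFiberEquiv e, fun i => (Equiv.ofFiberEquiv_map e i).symm⟩

lemma prod_monomial {ι : Type*} (t : Finset ι) (d : ι → (Fin m →₀ ℕ)) :
    (∏ i ∈ t, (monomial (d i) (1 : ℂ))) = monomial (∑ i ∈ t, d i) 1 := by
  classical
  induction t using Finset.cons_induction with
  | empty => simp
  | cons a t ha ih => rw [Finset.prod_cons, Finset.sum_cons, ih, monomial_mul, one_mul]

lemma prod_X_eq (w : Fin s → Fin m) :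
    (∏ i, (X (w i) : MvPolynomial (Fin m) ℂ)) = monomial (nu w) 1 := by
  have h1 : ∀ i : Fin s, (X (w i) : MvPolynomial (Fin m) ℂ) = monomial (Finsupp.single (w i) 1) 1 :=
    fun i => by rw [← X_pow_eq_monomial, pow_one]
  simp_rw [h1]
  rw [prod_monomial, nu]

lemma counting (α : Fin m →₀ ℕ) (hα : α.degree = s) :
    (#(univ.filter fun w : Fin s → Fin m => nu w = α) : ℕ) * (∏ j, ((α j).factorial)) =
      s.factorial := by
  classical
  have hsum : ∑ j, α j = s := by rw [← degree_eq_sum, hα]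
  have key : ((∑ j : Fin m, X j : MvPolynomial (Fin m) ℂ)) ^ s =
      ∑ w : Fin s → Fin m, monomial (nu w) 1 := by
    have h1 : ((∑ j : Fin m, X j : MvPolynomial (Fin m) ℂ)) ^ s =
        ∏ _i : Fin s, (∑ j : Fin m, X j : MvPolynomial (Fin m) ℂ) := by
      rw [Finset.prod_const, Finset.card_univ, Fintype.card_fin]
    rw [h1, Finset.prod_univ_sum, Fintype.piFinset_univ]
    exact Finset.sum_congr rfl fun w _ => prod_X_eq w
  have hfin : ∀ k : Fin m → ℕ, (∑ j, Finsupp.single j (k j) : Fin m →₀ ℕ) = α ↔ k = ⇑α := by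
    intro k
    constructor
    · intro hk
      funext j
      have h2 := congrArg (fun f : Fin m →₀ ℕ => f j) hk
      simpa [Finsupp.finset_sum_apply, Finsupp.single_apply, Finset.sum_ite_eq] using h2
    · intro hk
      subst hk
      ext j
      simp [Finsupp.finset_sum_apply, Finsupp.single_apply, Finset.sum_ite_eq]
  have lhs : coeff α (((∑ j : Fin m, X j : MvPolynomial (Fin m) ℂ)) ^ s) =
      (Nat.multinomial univ ⇑α : ℂ) := by
    rw [Finset.sum_pow_eq_sum_piAntidiag, MvPolynomial.coeff_sum]
    have hterm : ∀ k : Fin m → ℕ,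
        coeff α ((Nat.multinomial univ k : MvPolynomial (Fin m) ℂ) * ∏ j, X j ^ k j) =
        if k = ⇑α then (Nat.multinomial univ k : ℂ) else 0 := by
      intro k
      have hX : (∏ j, (X j : MvPolynomial (Fin m) ℂ) ^ k j) =
          monomial (∑ j, Finsupp.single j (k j)) 1 := by
        simp_rw [X_pow_eq_monomial]
        exact prod_monomial _ _
      rw [hX, ← map_natCast (C : ℂ →+* MvPolynomial (Fin m) ℂ), coeff_C_mul, coeff_monomial,
        mul_ite, mul_one, mul_zero]
      exact if_congr (hfin k) rfl rfl
    rw [Finset.sum_congr rfl fun k _ => hterm k,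
      Finset.sum_ite_eq' (Finset.piAntidiag univ s) (⇑α) (fun k => (Nat.multinomial univ k : ℂ)),
      if_pos]
    rw [Finset.mem_piAntidiag]
    exact ⟨hsum, fun j _ => Finset.mem_univ j⟩
  have rhs : coeff α (∑ w : Fin s → Fin m, (monomial (nu w) (1 : ℂ))) =
      ((#(univ.filter fun w : Fin s → Fin m => nu w = α) : ℕ) : ℂ) := by
    rw [MvPolynomial.coeff_sum, Finset.card_filter]
    push_cast
    exact Finset.sum_congr rfl fun w _ => by rw [coeff_monomial]
  have hcast : ((#(univ.filter fun w : Fin s → Fin m => nu w = α) : ℕ) : ℂ) =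
      (Nat.multinomial univ ⇑α : ℂ) := by rw [← rhs, ← key, lhs]
  have hcard : #(univ.filter fun w : Fin s → Fin m => nu w = α) = Nat.multinomial univ ⇑α :=
    Nat.cast_injective hcast
  rw [hcard, mul_comm, Nat.multinomial_spec, hsum]

end BWaux

open BWaux

/-- The symmetrized tensor coefficient of `p` at the word `w`. -/
def Tc {n : ℕ} (s : ℕ) (p : MvPolynomial (Fin (n + 1)) ℂ) (w : Fin s → Fin (n + 1)) : ℂ :=
  coeff (nu w) p * (∏ j, (((nu w) j).factorial : ℂ)) / (s.factorial : ℂ)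

lemma Tc_perm {n s : ℕ} (p : MvPolynomial (Fin (n + 1)) ℂ) (w : Fin s → Fin (n + 1))
    (σ : Equiv.Perm (Fin s)) : Tc s p (fun i => w (σ i)) = Tc s p w := by
  rw [Tc, Tc, nu_comp_perm]

lemma repr_of_homog {n s : ℕ} {p : MvPolynomial (Fin (n + 1)) ℂ} (hp : p.IsHomogeneous s) :
    p = ∑ w : Fin s → Fin (n + 1), Tc s p w • monomial (nu w) 1 := by
  classical
  ext α
  rw [MvPolynomial.coeff_sum]
  have hterm : ∀ w : Fin s → Fin (n + 1), coeff α (Tc s p w • monomial (nu w) (1 : ℂ)) =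
      if nu w = α then coeff α p * (∏ j, ((α j).factorial : ℂ)) / (s.factorial : ℂ) else 0 := by
    intro w
    rw [coeff_smul, coeff_monomial]
    by_cases hw : nu w = α
    · rw [if_pos hw, if_pos hw, smul_eq_mul, mul_one, Tc, hw]
    · rw [if_neg hw, if_neg hw, smul_eq_mul, mul_zero]
  rw [Finset.sum_congr rfl fun w _ => hterm w, ← Finset.sum_filter, Finset.sum_const,
    nsmul_eq_mul]
  by_cases hα : α.degree = s
  · have hc := counting (s := s) α hα
    have hs : ((s.factorial : ℂ)) ≠ 0 := Nat.cast_ne_zero.mpr s.factorial_ne_zero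
    have hcc : ((#(univ.filter fun w : Fin s → Fin (n + 1) => nu w = α) : ℕ) : ℂ) *
        (∏ j, ((α j).factorial : ℂ)) = (s.factorial : ℂ) := by
      push_cast [← hc]
      ring
    field_simp
    linear_combination -coeff α p * hcc
  · rw [hp.coeff_eq_zero hα]
    simp

lemma comp_expand {n s : ℕ} (U : Matrix (Fin (n + 1)) (Fin (n + 1)) ℂ)
    (c : (Fin s → Fin (n + 1)) → ℂ) :
    compVars U (∑ w : Fin s → Fin (n + 1), c w • monomial (nu w) 1) =
      ∑ v : Fin s → Fin (n + 1),
        (∑ w : Fin s → Fin (n + 1), c w * ∏ i, U (w i) (v i)) • monomial (nu v) 1 := by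
  classical
  rw [compVars, map_sum]
  have hmon : ∀ w : Fin s → Fin (n + 1),
      (aeval fun j => ∑ k, (C (U j k) * X k : MvPolynomial (Fin (n + 1)) ℂ))
        ((monomial (nu w) 1 : MvPolynomial (Fin (n + 1)) ℂ)) =
      ∑ v : Fin s → Fin (n + 1), (∏ i, U (w i) (v i)) • monomial (nu v) 1 := by
    intro w
    rw [← prod_X_eq w, map_prod]
    simp only [aeval_X]
    rw [Finset.prod_univ_sum, Fintype.piFinset_univ]
    refine Finset.sum_congr rfl fun v _ => ?_
    rw [Finset.prod_mul_distrib, ← map_prod (C : ℂ →+* MvPolynomial (Fin (n + 1)) ℂ),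
      prod_X_eq v, smul_eq_C_mul]
  have h2 : ∀ w : Fin s → Fin (n + 1),
      (aeval fun j => ∑ k, (C (U j k) * X k : MvPolynomial (Fin (n + 1)) ℂ))
        ((c w • monomial (nu w) 1 : MvPolynomial (Fin (n + 1)) ℂ)) =
      ∑ v : Fin s → Fin (n + 1), (c w * ∏ i, U (w i) (v i)) • monomial (nu v) 1 := by
    intro w
    rw [map_smul, hmon w, Finset.smul_sum]
    exact Finset.sum_congr rfl fun v _ => by rw [smul_smul]
  rw [Finset.sum_congr rfl fun w _ => h2 w, Finset.sum_comm]
  exact Finset.sum_congr rfl fun v _ => (Finset.sum_smul).symm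

lemma mixed {n s : ℕ} (r q' : MvPolynomial (Fin (n + 1)) ℂ) (c : (Fin s → Fin (n + 1)) → ℂ)
    (hr : r = ∑ w : Fin s → Fin (n + 1), c w • monomial (nu w) 1) :
    BWinner s r q' = ∑ w : Fin s → Fin (n + 1),
      (∏ j, (((nu w) j).factorial : ℂ)) / (s.factorial : ℂ) * c w *
        (starRingEnd ℂ) (coeff (nu w) q') := by
  classical
  have hcoeff : ∀ α, coeff α r = ∑ w : Fin s → Fin (n + 1), if nu w = α then c w else 0 := by
    intro α
    rw [hr, MvPolynomial.coeff_sum]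
    refine Finset.sum_congr rfl fun w _ => ?_
    rw [coeff_smul, coeff_monomial, smul_eq_mul, mul_ite, mul_one, mul_zero]
  set J : Finset (Fin (n + 1) →₀ ℕ) :=
    (r.support ∪ q'.support) ∪ Finset.image nu (univ : Finset (Fin s → Fin (n + 1))) with hJ
  have step1 : BWinner s r q' = ∑ α ∈ J,
      (∏ j, ((α j).factorial : ℂ)) / (s.factorial : ℂ) * coeff α r *
        (starRingEnd ℂ) (coeff α q') := by
    rw [BWinner]
    refine Finset.sum_subset Finset.subset_union_left fun α _ hα => ?_
    have h0 : coeff α r = 0 := by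
      by_contra hne
      exact hα (Finset.mem_union_left _ (MvPolynomial.mem_support_iff.mpr hne))
    rw [h0, mul_zero, zero_mul]
  rw [step1]
  have step2 : ∀ α ∈ J,
      (∏ j, ((α j).factorial : ℂ)) / (s.factorial : ℂ) * coeff α r *
        (starRingEnd ℂ) (coeff α q') =
      ∑ w : Fin s → Fin (n + 1), if nu w = α then
        (∏ j, (((nu w) j).factorial : ℂ)) / (s.factorial : ℂ) * c w *
          (starRingEnd ℂ) (coeff (nu w) q') else 0 := by
    intro α _
    rw [hcoeff α, Finset.mul_sum, Finset.sum_mul]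
    refine Finset.sum_congr rfl fun w _ => ?_
    by_cases hw : nu w = α
    · rw [if_pos hw, if_pos hw, hw]
    · rw [if_neg hw, if_neg hw, mul_zero, zero_mul]
  rw [Finset.sum_congr rfl step2, Finset.sum_comm]
  refine Finset.sum_congr rfl fun w _ => ?_
  rw [Finset.sum_ite_eq J (nu w)
    (fun α => (∏ j, (((nu w) j).factorial : ℂ)) / (s.factorial : ℂ) * c w *
      (starRingEnd ℂ) (coeff (nu w) q')), if_pos]
  exact Finset.mem_union_right _ (Finset.mem_image_of_mem nu (Finset.mem_univ w))

/-- **Unitary invariance of the Bombieri–Weyl product**: for every unitary `(n+1)×(n+1)` complex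
matrix `U` and all homogeneous polynomials `h, g` of degree `s`,
`⟨h∘U, g∘U⟩ = ⟨h, g⟩` for the Bombieri–Weyl Hermitian product. -/
theorem bwInner_comp_unitary {n s : ℕ}
    (U : Matrix (Fin (n + 1)) (Fin (n + 1)) ℂ)
    (hU : U ∈ Matrix.unitaryGroup (Fin (n + 1)) ℂ)
    (h g : MvPolynomial (Fin (n + 1)) ℂ)
    (hh : h.IsHomogeneous s) (hg : g.IsHomogeneous s) :
    BWinner s (compVars U h) (compVars U g) = BWinner s h g := by
  classical
  set cp : (Fin s → Fin (n + 1)) → ℂ :=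
    fun v => ∑ w : Fin s → Fin (n + 1), Tc s h w * ∏ i, U (w i) (v i) with hcp
  set dq : (Fin s → Fin (n + 1)) → ℂ :=
    fun v => ∑ w : Fin s → Fin (n + 1), Tc s g w * ∏ i, U (w i) (v i) with hdq
  have hcomph : compVars U h = ∑ v : Fin s → Fin (n + 1), cp v • monomial (nu v) 1 := by
    conv_lhs => rw [repr_of_homog hh]
    exact comp_expand U _
  have hcompg : compVars U g = ∑ v : Fin s → Fin (n + 1), dq v • monomial (nu v) 1 := by
    conv_lhs => rw [repr_of_homog hg]
    exact comp_expand U _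
  -- symmetry of dq
  have hdq_sym : ∀ v v' : Fin s → Fin (n + 1), nu v' = nu v → dq v' = dq v := by
    intro v v' hvv'
    obtain ⟨σ, hσ⟩ := exists_perm_of_nu_eq hvv'
    rw [hdq]
    let e : (Fin s → Fin (n + 1)) ≃ (Fin s → Fin (n + 1)) :=
      ⟨fun u i => u (σ.symm i), fun u i => u (σ i),
        fun u => funext fun i => by simp, fun u => funext fun i => by simp⟩
    refine Fintype.sum_equiv e _ _ fun w => ?_
    show Tc s g w * ∏ i, U (w i) (v' i) =
      Tc s g (fun i => w (σ.symm i)) * ∏ i, U (w (σ.symm i)) (v i)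
    have h1 : Tc s g (fun i => w (σ.symm i)) = Tc s g w := Tc_perm g w σ.symm
    rw [h1]
    congr 1
    rw [← Equiv.prod_comp σ (fun i => U (w (σ.symm i)) (v i))]
    refine Finset.prod_congr rfl fun i _ => ?_
    rw [Equiv.symm_apply_apply, ← hσ]
  -- unitarity of U, entrywise
  have hunit : ∀ a b : Fin (n + 1),
      (∑ k, U a k * (starRingEnd ℂ) (U b k)) = if a = b then 1 else 0 := by
    intro a b
    have h1 : U * star U = 1 := (Matrix.mem_unitaryGroup_iff).mp hU
    have h2 : (U * star U) a b = (1 : Matrix (Fin (n + 1)) (Fin (n + 1)) ℂ) a b := by rw [h1]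
    rw [Matrix.mul_apply, Matrix.one_apply] at h2
    rw [← h2]
    exact Finset.sum_congr rfl fun k _ => by rw [Matrix.star_apply, starRingEnd_apply]
  -- step A : BW of composed = ∑ v, cp v * conj (dq v)
  have stepA : BWinner s (compVars U h) (compVars U g) =
      ∑ v : Fin s → Fin (n + 1), cp v * (starRingEnd ℂ) (dq v) := by
    rw [mixed (compVars U h) (compVars U g) cp hcomph]
    refine Finset.sum_congr rfl fun v _ => ?_
    have hcg : coeff (nu v) (compVars U g) =
        ∑ v' : Fin s → Fin (n + 1), if nu v' = nu v then dq v' else 0 := by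
      rw [hcompg, MvPolynomial.coeff_sum]
      exact Finset.sum_congr rfl fun v' _ => by
        rw [coeff_smul, coeff_monomial, smul_eq_mul, mul_ite, mul_one, mul_zero]
    have hval : ∀ v' : Fin s → Fin (n + 1),
        (if nu v' = nu v then dq v' else 0) = (if nu v' = nu v then dq v else 0) := by
      intro v'
      by_cases hv' : nu v' = nu v
      · rw [if_pos hv', if_pos hv', hdq_sym v v' hv']
      · rw [if_neg hv', if_neg hv']
    have hcg2 : coeff (nu v) (compVars U g) =
        ((#(univ.filter fun v' : Fin s → Fin (n + 1) => nu v' = nu v) : ℕ) : ℂ) * dq v := by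
      rw [hcg, Finset.sum_congr rfl fun v' _ => hval v', ← Finset.sum_filter,
        Finset.sum_const, nsmul_eq_mul]
    rw [hcg2, map_mul, map_natCast]
    have hc := counting (s := s) (nu v) (nu_degree v)
    have hs : ((s.factorial : ℂ)) ≠ 0 := Nat.cast_ne_zero.mpr s.factorial_ne_zero
    have hcc : ((#(univ.filter fun v' : Fin s → Fin (n + 1) => nu v' = nu v) : ℕ) : ℂ) *
        (∏ j, (((nu v) j).factorial : ℂ)) = (s.factorial : ℂ) := by
      push_cast [← hc]
      ring
    have h3 : (∏ j, (((nu v) j).factorial : ℂ)) / (s.factorial : ℂ) *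
        ((#(univ.filter fun v' : Fin s → Fin (n + 1) => nu v' = nu v) : ℕ) : ℂ) = 1 := by
      rw [div_mul_eq_mul_div, mul_comm, hcc, div_self hs]
    calc (∏ j, (((nu v) j).factorial : ℂ)) / (s.factorial : ℂ) * cp v *
          (((#(univ.filter fun v' : Fin s → Fin (n + 1) => nu v' = nu v) : ℕ) : ℂ) *
            (starRingEnd ℂ) (dq v))
        = ((∏ j, (((nu v) j).factorial : ℂ)) / (s.factorial : ℂ) *
            ((#(univ.filter fun v' : Fin s → Fin (n + 1) => nu v' = nu v) : ℕ) : ℂ)) *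
            (cp v * (starRingEnd ℂ) (dq v)) := by ring
      _ = cp v * (starRingEnd ℂ) (dq v) := by rw [h3, one_mul]
  -- step B : unitarity collapses the sum
  have stepB : (∑ v : Fin s → Fin (n + 1), cp v * (starRingEnd ℂ) (dq v)) =
      ∑ w : Fin s → Fin (n + 1), Tc s h w * (starRingEnd ℂ) (Tc s g w) := by
    have e1 : (∑ v : Fin s → Fin (n + 1), cp v * (starRingEnd ℂ) (dq v)) =
        ∑ v : Fin s → Fin (n + 1), ∑ w : Fin s → Fin (n + 1), ∑ w' : Fin s → Fin (n + 1),
          (Tc s h w * (starRingEnd ℂ) (Tc s g w')) *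
            ∏ i, (U (w i) (v i) * (starRingEnd ℂ) (U (w' i) (v i))) := by
      refine Finset.sum_congr rfl fun v _ => ?_
      simp only [hcp, hdq]
      rw [map_sum, Finset.sum_mul_sum]
      refine Finset.sum_congr rfl fun w _ => Finset.sum_congr rfl fun w' _ => ?_
      rw [map_mul, map_prod, Finset.prod_mul_distrib]
      ring
    rw [e1, Finset.sum_comm]
    refine Finset.sum_congr rfl fun w _ => ?_
    rw [Finset.sum_comm]
    have e2 : ∀ w' : Fin s → Fin (n + 1),
        (∑ v : Fin s → Fin (n + 1),
          (Tc s h w * (starRingEnd ℂ) (Tc s g w')) *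
            ∏ i, (U (w i) (v i) * (starRingEnd ℂ) (U (w' i) (v i)))) =
        (Tc s h w * (starRingEnd ℂ) (Tc s g w')) * if w = w' then 1 else 0 := by
      intro w'
      rw [← Finset.mul_sum]
      congr 1
      have e3 : (∑ v : Fin s → Fin (n + 1),
          ∏ i, (U (w i) (v i) * (starRingEnd ℂ) (U (w' i) (v i)))) =
          ∏ i, ∑ k, (U (w i) k * (starRingEnd ℂ) (U (w' i) k)) := by
        rw [Finset.prod_univ_sum, Fintype.piFinset_univ]
      rw [e3]
      simp_rw [hunit]
      by_cases hww : w = w'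
      · subst hww; simp
      · rw [if_neg hww]
        obtain ⟨i, hi⟩ := Function.ne_iff.mp hww
        exact Finset.prod_eq_zero (Finset.mem_univ i) (by rw [if_neg hi])
    rw [Finset.sum_congr rfl fun w' _ => e2 w']
    simp only [mul_ite, mul_one, mul_zero]
    rw [Finset.sum_ite_eq univ w (fun w' => Tc s h w * (starRingEnd ℂ) (Tc s g w')),
      if_pos (Finset.mem_univ w)]
  -- step C : identify the right-hand side
  have stepC : BWinner s h g =
      ∑ w : Fin s → Fin (n + 1), Tc s h w * (starRingEnd ℂ) (Tc s g w) := by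
    rw [mixed h g (Tc s h) (repr_of_homog hh)]
    refine Finset.sum_congr rfl fun w _ => ?_
    have hconj : (starRingEnd ℂ) (Tc s g w) =
        (starRingEnd ℂ) (coeff (nu w) g) *
          ((∏ j, (((nu w) j).factorial : ℂ)) / (s.factorial : ℂ)) := by
      rw [Tc, map_div₀, map_mul, map_prod]
      simp only [map_natCast]
      rw [mul_div_assoc]
    rw [hconj]
    ring
  rw [stepA, stepB, stepC]

end
end

section
/- Let h ∈ H_{(d)} with ‖h‖ = 1 and let ζ ∈ ℂ^{n+1} be a unit vector with h(ζ) = 0 and Dh(ζ)|_{ζ^⊥} invertible. If ḣ ∈ H_{(d)} and ζ̇ ∈ ℂ^{n+1} satisfy ⟨ζ̇, ζ⟩ = 0 and ḣ(ζ) + Dh(ζ)ζ̇ = 0 (i.e. (ḣ, ζ̇) is a tangent vector to the solution variety {(h,ζ) : h(ζ)=0} at (h,ζ)), then ‖ζ̇‖ ≤ μ(h,ζ)·‖ḣ‖. -/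
/-!
Since `(ḣ, ζ̇)` is tangent to the solution variety, `ζ̇ ∈ ζ^⊥` solves
`Dh(ζ)|_{ζ^⊥} ζ̇ = -ḣ(ζ) = Diag(√d_i) u` with `u_i = -ḣ_i(ζ)/√d_i`, so
`‖ζ̇‖ ≤ ‖(Dh(ζ)|_{ζ^⊥})⁻¹ Diag(√d_i)‖ · ‖u‖ ≤ μ(h,ζ) · ‖ḣ(ζ)‖`.
It remains to see `‖ḣ(ζ)‖ ≤ ‖ḣ‖`: for a form `p` of degree `s`, Cauchy–Schwarz with the
Bombieri–Weyl weights `α!/s!` gives `|p(ζ)|² ≤ ‖p‖² · ∑_{|α|=s} (s choose α) |ζ^α|² = ‖p‖² ‖ζ‖^{2s}`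
by the multinomial theorem.
-/

noncomputable section

open MvPolynomial Finset Metric MeasureTheory

/-- `ℂ^m` with its Hermitian (ℓ²) structure. -/
abbrev Euc (m : ℕ) : Type := EuclideanSpace ℂ (Fin m)

/-- A system of `n` polynomials in the `n+1` variables `x_0, …, x_n`. -/
abbrev PolySys (n : ℕ) : Type := Fin n → MvPolynomial (Fin (n + 1)) ℂ

/-- `h` belongs to `H_(d)`: each `h i` is homogeneous of degree `d i`. -/
def IsDegSys {n : ℕ} (d : Fin n → ℕ) (h : PolySys n) : Prop :=
  ∀ i, (h i).IsHomogeneous (d i)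

/-- The Bombieri–Weyl inner product of two systems in `H_(d)`. -/
def BWsysInner {n : ℕ} (d : Fin n → ℕ) (h g : PolySys n) : ℂ :=
  ∑ i, BWinner (d i) (h i) (g i)

/-- The Bombieri–Weyl norm of a system. -/
def BWnorm {n : ℕ} (d : Fin n → ℕ) (h : PolySys n) : ℝ :=
  Real.sqrt (BWsysInner d h h).re

/-- Evaluation map of a system, as a map `ℂ^{n+1} → ℂ^n`. -/
def evalSys {n : ℕ} (h : PolySys n) (x : Euc (n + 1)) : Euc n :=
  WithLp.toLp 2 (fun i => MvPolynomial.eval (fun j => x j) (h i))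

/-- Jacobian matrix of a system at a point. -/
def jacMat {n : ℕ} (h : PolySys n) (ζ : Euc (n + 1)) : Matrix (Fin n) (Fin (n + 1)) ℂ :=
  Matrix.of fun i j => MvPolynomial.eval (fun k => ζ k) (MvPolynomial.pderiv j (h i))

/-- The derivative `Dh(ζ) : ℂ^{n+1} → ℂ^n` of a system at a point. -/
def Dsys {n : ℕ} (h : PolySys n) (ζ : Euc (n + 1)) : Euc (n + 1) →L[ℂ] Euc n :=
  LinearMap.toContinuousLinearMap (Matrix.toEuclideanLin (jacMat h ζ))

/-- The restriction `Dh(ζ)|_{ζ^⊥}` of the derivative to the orthogonal complement of `ζ`. -/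
def Dperp {n : ℕ} (h : PolySys n) (ζ : Euc (n + 1)) : (ℂ ∙ ζ)ᗮ →L[ℂ] Euc n :=
  (Dsys h ζ).comp (Submodule.subtypeL (ℂ ∙ ζ)ᗮ)

/-- Invertibility of `Dh(ζ)|_{ζ^⊥}`. -/
def DperpInvertible {n : ℕ} (h : PolySys n) (ζ : Euc (n + 1)) : Prop :=
  ∃ e : ((ℂ ∙ ζ)ᗮ ≃L[ℂ] Euc n), (e : (ℂ ∙ ζ)ᗮ →L[ℂ] Euc n) = Dperp h ζ

/-- The diagonal map `Diag(d_1^{1/2},…,d_n^{1/2})` on `ℂ^n`. -/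
def diagSqrtDeg {n : ℕ} (d : Fin n → ℕ) : Euc n →L[ℂ] Euc n :=
  LinearMap.toContinuousLinearMap
    (Matrix.toEuclideanLin (Matrix.diagonal fun i => ((Real.sqrt (d i) : ℝ) : ℂ)))

/-- The normalized condition number `μ(h,ζ) = ‖h‖·‖(Dh(ζ)|_{ζ^⊥})^{-1}∘Diag(√d_i)‖`
(`ContinuousLinearMap.inverse` yields the junk value `0` when `Dh(ζ)|_{ζ^⊥}` is not
invertible, in which case the true value is `+∞`; we only use `muCond` where invertibility
holds). -/
def muCond {n : ℕ} (d : Fin n → ℕ) (h : PolySys n) (ζ : Euc (n + 1)) : ℝ :=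
  BWnorm d h * ‖((Dperp h ζ).inverse).comp (diagSqrtDeg d)‖

/-- The discriminant `Σ`: systems having a nonzero zero at which the restricted derivative is
not invertible. -/
def InDiscrim {n : ℕ} (h : PolySys n) : Prop :=
  ∃ ζ : Euc (n + 1), ζ ≠ 0 ∧ evalSys h ζ = 0 ∧ ¬ DperpInvertible h ζ

def bwWeight {σ : Type*} [Fintype σ] (s : ℕ) (α : σ →₀ ℕ) : ℝ :=
  (∏ j, ((α j).factorial : ℝ)) / s.factorial

lemma bwWeight_nonneg {σ : Type*} [Fintype σ] (s : ℕ) (α : σ →₀ ℕ) : 0 ≤ bwWeight s α := by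
  unfold bwWeight
  positivity

lemma bwWeight_mul_multinomial {σ : Type*} [Fintype σ] {s : ℕ} {α : σ →₀ ℕ}
    (hα : α.degree = s) : bwWeight s α * Nat.multinomial univ α = 1 := by
  have hspec := Nat.multinomial_spec univ α
  rw [← Finsupp.degree_eq_sum, hα] at hspec
  rw [bwWeight, div_mul_eq_mul_div, div_eq_one_iff_eq (by positivity)]
  exact_mod_cast hspec

lemma BWinner_self_re {n s : ℕ} (p : MvPolynomial (Fin (n + 1)) ℂ) :
    (BWinner s p p).re = ∑ α ∈ p.support, bwWeight s α * ‖p.coeff α‖ ^ 2 := by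
  rw [BWinner, union_self, Complex.re_sum]
  refine sum_congr rfl fun α _ => ?_
  have hweight : (∏ j, ((α j).factorial : ℂ)) / s.factorial = ((bwWeight s α : ℝ) : ℂ) := by
    simp [bwWeight]
  rw [mul_assoc, Complex.mul_conj, Complex.normSq_eq_norm_sq, hweight, ← Complex.ofReal_mul,
    Complex.ofReal_re]

lemma sum_multinomial_mul_prod_pow_le {σ : Type*} [Fintype σ] {x : σ → ℝ} (hx : ∀ j, 0 ≤ x j)
    {s : ℕ} {S : Finset (σ →₀ ℕ)} (hS : ∀ α ∈ S, α.degree = s) :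
    ∑ α ∈ S, Nat.multinomial univ α * ∏ j, x j ^ α j ≤ (∑ j, x j) ^ s := by
  classical
  rw [sum_pow_eq_sum_piAntidiag, ← sum_image (s := S) (g := (⇑))
    (f := fun k : σ → ℕ => (Nat.multinomial univ k : ℝ) * ∏ j, x j ^ k j)
    fun _ _ _ _ h => DFunLike.coe_injective h]
  refine sum_le_sum_of_subset_of_nonneg ?_ fun _ _ _ =>
    mul_nonneg (Nat.cast_nonneg _) (prod_nonneg fun j _ => pow_nonneg (hx j) _)
  intro k hk
  obtain ⟨α, hα, rfl⟩ := mem_image.mp hk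
  simp [← Finsupp.degree_eq_sum, hS α hα]

lemma norm_eval_sq_le_BWinner_mul {n s : ℕ} {p : MvPolynomial (Fin (n + 1)) ℂ}
    (hp : p.IsHomogeneous s) (ζ : Euc (n + 1)) :
    ‖eval (fun j => ζ j) p‖ ^ 2 ≤ (BWinner s p p).re * (‖ζ‖ ^ 2) ^ s := by
  have hdeg : ∀ α ∈ p.support, α.degree = s := fun α hα => by
    by_contra hne
    exact mem_support_iff.mp hα (hp.coeff_eq_zero hne)
  have htri : ‖eval (fun j => ζ j) p‖ ≤ ∑ α ∈ p.support, ‖p.coeff α‖ * ∏ j, ‖ζ j‖ ^ α j := by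
    rw [eval_eq']
    refine (norm_sum_le _ _).trans_eq (sum_congr rfl fun α _ => ?_)
    simp [norm_prod]
  -- Cauchy–Schwarz against the weights `α!/s!` and their reciprocals, the multinomial coefficients
  have hcs : (∑ α ∈ p.support, ‖p.coeff α‖ * ∏ j, ‖ζ j‖ ^ α j) ^ 2 ≤
      (∑ α ∈ p.support, bwWeight s α * ‖p.coeff α‖ ^ 2) *
        ∑ α ∈ p.support, Nat.multinomial univ α * ∏ j, (‖ζ j‖ ^ 2) ^ α j := by
    refine sum_sq_le_sum_mul_sum_of_sq_le_mul _ (fun α _ => ?_) (fun _ _ => by positivity)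
      fun α hα => le_of_eq ?_
    · exact mul_nonneg (bwWeight_nonneg s α) (sq_nonneg _)
    · calc (‖p.coeff α‖ * ∏ j, ‖ζ j‖ ^ α j) ^ 2
          = (bwWeight s α * Nat.multinomial univ α) *
              (‖p.coeff α‖ ^ 2 * ∏ j, (‖ζ j‖ ^ 2) ^ α j) := by
            rw [bwWeight_mul_multinomial (hdeg α hα), one_mul, mul_pow, ← prod_pow]
            simp_rw [← pow_mul, mul_comm]
        _ = _ := by ring
  have hmult :=
    sum_multinomial_mul_prod_pow_le (x := fun j => ‖ζ j‖ ^ 2) (fun _ => sq_nonneg _) hdeg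
  rw [← EuclideanSpace.norm_sq_eq] at hmult
  calc ‖eval (fun j => ζ j) p‖ ^ 2
      ≤ (∑ α ∈ p.support, ‖p.coeff α‖ * ∏ j, ‖ζ j‖ ^ α j) ^ 2 := by gcongr
    _ ≤ _ := hcs
    _ ≤ (BWinner s p p).re * (‖ζ‖ ^ 2) ^ s := by
        rw [BWinner_self_re]
        gcongr
        exact sum_nonneg fun α _ => mul_nonneg (bwWeight_nonneg s α) (sq_nonneg _)

lemma norm_evalSys_le_BWnorm {n : ℕ} {d : Fin n → ℕ} {h : PolySys n} (hh : IsDegSys d h)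
    {ζ : Euc (n + 1)} (hζ : ‖ζ‖ = 1) : ‖evalSys h ζ‖ ≤ BWnorm d h := by
  rw [BWnorm, BWsysInner, Complex.re_sum, EuclideanSpace.norm_eq]
  gcongr with i
  simpa [evalSys, hζ] using norm_eval_sq_le_BWinner_mul (hh i) ζ

lemma diagSqrtDeg_apply {n : ℕ} (d : Fin n → ℕ) (u : Euc n) (i : Fin n) :
    diagSqrtDeg d u i = (Real.sqrt (d i) : ℂ) * u i := by
  simp [diagSqrtDeg, Matrix.mulVec_diagonal]

lemma exists_diagSqrtDeg_eq_of_norm_le {n : ℕ} {d : Fin n → ℕ} (hd : ∀ i, 1 ≤ d i) (w : Euc n) :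
    ∃ u : Euc n, diagSqrtDeg d u = w ∧ ‖u‖ ≤ ‖w‖ := by
  have hsqrt : ∀ i, 1 ≤ Real.sqrt (d i) := fun i => Real.one_le_sqrt.mpr (by exact_mod_cast hd i)
  refine ⟨WithLp.toLp 2 fun i => w i / (Real.sqrt (d i) : ℂ), ?_, ?_⟩
  · ext i
    rw [diagSqrtDeg_apply, PiLp.toLp_apply, mul_div_cancel₀]
    exact_mod_cast (zero_lt_one.trans_le (hsqrt i)).ne'
  · rw [EuclideanSpace.norm_eq, EuclideanSpace.norm_eq]
    gcongr with i
    rw [PiLp.toLp_apply, norm_div, Complex.norm_real, Real.norm_of_nonneg (by positivity)]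
    exact div_le_self (norm_nonneg _) (hsqrt i)

lemma norm_le_of_Dsys_eq_diagSqrtDeg {n : ℕ} {d : Fin n → ℕ} {h : PolySys n} {ζ : Euc (n + 1)}
    (hinv : DperpInvertible h ζ) {v : Euc (n + 1)} (horth : inner ℂ v ζ = 0) {u : Euc n}
    (hv : Dsys h ζ v = diagSqrtDeg d u) :
    ‖v‖ ≤ ‖((Dperp h ζ).inverse).comp (diagSqrtDeg d)‖ * ‖u‖ := by
  let v' : (ℂ ∙ ζ)ᗮ := ⟨v, Submodule.mem_orthogonal_singleton_iff_inner_left.mpr horth⟩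
  have hv' : v' = ((Dperp h ζ).inverse.comp (diagSqrtDeg d)) u := by
    rw [ContinuousLinearMap.comp_apply, ← hv]
    exact (ContinuousLinearMap.IsInvertible.inverse_apply_self hinv v').symm
  calc ‖v‖ = ‖v'‖ := rfl
    _ ≤ _ := hv' ▸ ContinuousLinearMap.le_opNorm _ u

theorem norm_zetadot_le_mu_mul_norm_hdot_general {n : ℕ}
    (d : Fin n → ℕ) (hd : ∀ i, 1 ≤ d i)
    (h : PolySys n) (hnorm : BWnorm d h = 1)
    (ζ : Euc (n + 1)) (hζ : ‖ζ‖ = 1)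
    (hinv : DperpInvertible h ζ)
    (hdot : PolySys n) (hdotdeg : IsDegSys d hdot)
    (ζdot : Euc (n + 1)) (horth : (inner ℂ ζdot ζ : ℂ) = 0)
    (htangent : evalSys hdot ζ + Dsys h ζ ζdot = 0) :
    ‖ζdot‖ ≤ muCond d h ζ * BWnorm d hdot := by
  obtain ⟨u, hu, hu_le⟩ := exists_diagSqrtDeg_eq_of_norm_le hd (-evalSys hdot ζ)
  have hDζdot : Dsys h ζ ζdot = diagSqrtDeg d u := by
    rw [hu, eq_neg_iff_add_eq_zero, add_comm, htangent]
  rw [muCond, hnorm, one_mul]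
  calc ‖ζdot‖ ≤ ‖((Dperp h ζ).inverse).comp (diagSqrtDeg d)‖ * ‖u‖ :=
        norm_le_of_Dsys_eq_diagSqrtDeg hinv horth hDζdot
    _ ≤ ‖((Dperp h ζ).inverse).comp (diagSqrtDeg d)‖ * BWnorm d hdot := by
        gcongr
        calc ‖u‖ ≤ ‖-evalSys hdot ζ‖ := hu_le
          _ = ‖evalSys hdot ζ‖ := norm_neg _
          _ ≤ BWnorm d hdot := norm_evalSys_le_BWnorm hdotdeg hζ

/-- **The condition number bounds the implicit function of the solution variety**:
if `(ḣ, ζ̇)` is tangent to the solution variety `{(h,ζ) : h(ζ) = 0}` at `(h,ζ)`, i.e.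
`⟨ζ̇,ζ⟩ = 0` and `ḣ(ζ) + Dh(ζ)ζ̇ = 0`, with `‖h‖ = 1`, `‖ζ‖ = 1`, `h(ζ) = 0` and
`Dh(ζ)|_{ζ^⊥}` invertible, then `‖ζ̇‖ ≤ μ(h,ζ)·‖ḣ‖`. -/
theorem norm_zetadot_le_mu_mul_norm_hdot {n : ℕ} (hn : 1 ≤ n)
    (d : Fin n → ℕ) (hd : ∀ i, 1 ≤ d i)
    (h : PolySys n) (hdeg : IsDegSys d h) (hnorm : BWnorm d h = 1)
    (ζ : Euc (n + 1)) (hζ : ‖ζ‖ = 1) (hz : evalSys h ζ = 0)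
    (hinv : DperpInvertible h ζ)
    (hdot : PolySys n) (hdotdeg : IsDegSys d hdot)
    (ζdot : Euc (n + 1)) (horth : (inner ℂ ζdot ζ : ℂ) = 0)
    (htangent : evalSys hdot ζ + Dsys h ζ ζdot = 0) :
    ‖ζdot‖ ≤ muCond d h ζ * BWnorm d hdot :=
  norm_zetadot_le_mu_mul_norm_hdot_general d hd h hnorm ζ hζ hinv hdot hdotdeg ζdot horth htangent
end
end
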